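/- arXiv:2010.08083 — 2 statements merged into one kernel-verified Lean document; each statement's English description precedes it below -/
import Mathlib

section
/- Let H be a simple graph with LICL(H) ≥ 6, i.e., H contains an induced cycle of length at least 6. Then dtw(H) ≥ 2; that is, there exists an acyclic orientation H→ of H such that every DAG tree decomposition of H→ has width at least 2. -/
/-!
Orient an induced cycle `c₀ ⋯ cₙ₋₁` (`n ≥ 6`) so that `c₀, c₂, c₄` are its only sources,
`c₁, c₃` are sinks and `c₄ → c₅ → ⋯ → cₙ₋₁ ← c₀`, and orient every other edge by a linear order
in which the cycle comes first. As the cycle is induced, `c₁`, `c₃` and `cₙ₋₁` are reachable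
from exactly the source pairs `{c₀, c₂}`, `{c₂, c₄}` and `{c₄, c₀}`: these three sources form a
triangle in the unique reachability graph. In a DAG tree decomposition, the bag at the median of
three bags containing `c₀`, `c₂`, `c₄` must reach `c₁`, `c₃` and `cₙ₋₁`, which no single source
does, so it holds two sources.
-/

/-- An acyclic orientation of a simple graph `H`: a relation `D` directing every
edge of `H` (and nothing else) with no directed cycle. -/
structure GraphOrientation {V : Type} (H : SimpleGraph V) : Type where
  D : V → V → Prop
  adj_of_rel : ∀ u v, D u v → H.Adj u v
  rel_of_adj : ∀ u v, H.Adj u v → D u v ∨ D v u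
  acyclic : ∀ v, ¬ Relation.TransGen D v v

namespace GraphOrientation

variable {V : Type} {H : SimpleGraph V}

/-- The set of sources of an acyclic orientation: vertices with no incoming edge. -/
def sources (O : GraphOrientation H) : Set V := {s | ∀ u, ¬ O.D u s}

/-- The set of vertices reachable from `s` by a directed path (including `s`). -/
def reach (O : GraphOrientation H) (s : V) : Set V := {v | Relation.ReflTransGen O.D s v}

/-- The set of vertices reachable from some vertex of `B`. -/
def reachSet (O : GraphOrientation H) (B : Set V) : Set V := ⋃ s ∈ B, O.reach s

end GraphOrientation

/-- `tree` together with the bag assignment `bag` is a (partial) DAG tree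
decomposition of the orientation `O` with respect to the vertex set `Sp`:
a finite tree whose bags are subsets of `Sp` whose union is `Sp`, such that
whenever a node `j` lies on the (unique) path between nodes `i` and `k`,
`reach(bag i) ∩ reach(bag k) ⊆ reach(bag j)`.
Taking `Sp = O.sources` gives the notion of a DAG tree decomposition of `O`. -/
def IsPDTD {V : Type} {H : SimpleGraph V} (O : GraphOrientation H) (Sp : Set V)
    {ι : Type} (tree : SimpleGraph ι) (bag : ι → Set V) : Prop :=
  Finite ι ∧ tree.IsTree ∧ (∀ i, bag i ⊆ Sp) ∧ (⋃ i, bag i) = Sp ∧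
    ∀ (i j k : ι) (p : tree.Walk i k), p.IsPath → j ∈ p.support →
      O.reachSet (bag i) ∩ O.reachSet (bag k) ⊆ O.reachSet (bag j)

/-- The width of a bag assignment: the maximum bag size. -/
noncomputable def bagWidth {V ι : Type} (bag : ι → Set V) : ℕ := ⨆ i, (bag i).ncard

/-- A width-one (partial) DAG tree decomposition: every bag is a singleton, and
distinct nodes carry distinct bags (so nodes may be identified with sources). -/
def IsWidthOnePDTD {V : Type} {H : SimpleGraph V} (O : GraphOrientation H) (Sp : Set V)
    {ι : Type} (tree : SimpleGraph ι) (bag : ι → Set V) : Prop :=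
  IsPDTD O Sp tree bag ∧ Function.Injective bag ∧ ∀ i, ∃ s : V, bag i = {s}

/-- `H` contains an induced cycle of length `n`. -/
def HasInducedCycleOfLength {V : Type} (H : SimpleGraph V) (n : ℕ) : Prop :=
  Nonempty (SimpleGraph.cycleGraph n ↪g H)

/-- The unique reachability graph of an orientation `O` over a set `Sp` of sources:
`s₁` and `s₂` are adjacent iff some vertex is reachable from both `s₁` and `s₂`
but from no other member of `Sp`. -/
def URGraph {V : Type} {H : SimpleGraph V} (O : GraphOrientation H) (Sp : Set V) :
    SimpleGraph V where
  Adj s₁ s₂ := s₁ ∈ Sp ∧ s₂ ∈ Sp ∧ s₁ ≠ s₂ ∧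
    ((O.reach s₁ ∩ O.reach s₂) \ O.reachSet (Sp \ {s₁, s₂})).Nonempty
  symm := by
    refine ⟨?_⟩
    rintro a b ⟨ha, hb, hab, hx⟩
    refine ⟨hb, ha, hab.symm, ?_⟩
    rwa [Set.inter_comm (O.reach b) (O.reach a), Set.pair_comm b a]
  loopless := by
    refine ⟨?_⟩
    rintro a ⟨-, -, h, -⟩
    exact h rfl

/-- `(x, (tree, bag))` is a good pair: some leaf `ℓ` of the width-one decomposition,
with unique neighbour `d`, satisfies `reach x ∩ reach ℓ ⊆ reach d`. -/
def GoodPair {V : Type} {H : SimpleGraph V} (O : GraphOrientation H)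
    {ι : Type} (tree : SimpleGraph ι) (bag : ι → Set V) (x : V) : Prop :=
  ∃ (i j : ι) (l d : V), tree.neighborSet i = {j} ∧ bag i = {l} ∧ bag j = {d} ∧
    O.reach x ∩ O.reach l ⊆ O.reach d

open SimpleGraph

namespace SimpleGraph.Walk

variable {V : Type} {G : SimpleGraph V}

lemma exists_eq_append_first_mem {a b : V} (p : G.Walk a b) (S : Set V) (hb : b ∈ S) :
    ∃ m ∈ S, ∃ (p₁ : G.Walk a m) (p₂ : G.Walk m b), p = p₁.append p₂ ∧
      ∀ x ∈ p₁.support, x ∈ S → x = m := by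
  induction p with
  | nil => exact ⟨_, hb, .nil, .nil, rfl, by simp⟩
  | @cons u v w h q ih =>
    by_cases hu : u ∈ S
    · exact ⟨u, hu, .nil, .cons h q, rfl, by simp⟩
    · obtain ⟨m, hm, p₁, p₂, rfl, hfirst⟩ := ih hb
      refine ⟨m, hm, .cons h p₁, p₂, rfl, ?_⟩
      intro x hx hxS
      rcases List.mem_cons.mp hx with rfl | hx
      · exact absurd hxS hu
      · exact hfirst x hx hxS

end SimpleGraph.Walk

lemma SimpleGraph.Connected.exists_median {ι : Type} {T : SimpleGraph ι} (hT : T.Connected)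
    (a b c : ι) :
    ∃ (m : ι) (pab : T.Walk a b) (pbc : T.Walk b c) (pac : T.Walk a c),
      pab.IsPath ∧ pbc.IsPath ∧ pac.IsPath ∧
      m ∈ pab.support ∧ m ∈ pbc.support ∧ m ∈ pac.support := by
  classical
  let p := (hT a b).some.toPath
  let q := (hT b c).some.toPath
  obtain ⟨m, hm, p₁, p₂, hp, hfirst⟩ :=
    p.1.exists_eq_append_first_mem {x | x ∈ q.1.support} q.1.start_mem_support
  have hp₁ : p₁.IsPath := (hp ▸ p.2).of_append_left
  have hq₂ : (q.1.dropUntil m hm).IsPath := q.2.dropUntil hm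
  have hpac : (p₁.append (q.1.dropUntil m hm)).IsPath := by
    rw [Walk.isPath_def, Walk.support_append]
    refine hp₁.support_nodup.append hq₂.support_nodup.tail fun x hx₁ hx₂ => ?_
    obtain rfl := hfirst x hx₁ (q.1.support_dropUntil_subset_support hm (List.tail_subset _ hx₂))
    have := hq₂.support_nodup
    rw [← Walk.cons_tail_support] at this
    exact (List.nodup_cons.mp this).1 hx₂
  refine ⟨m, p.1, q.1, _, p.2, q.2, hpac, ?_, hm, ?_⟩
  · rw [hp]
    exact Walk.support_subset_support_append_left _ _ p₁.end_mem_support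
  · exact Walk.support_subset_support_append_left _ _ p₁.end_mem_support

namespace GraphOrientation

variable {V : Type} {H : SimpleGraph V}

def ofRank {α : Type} [LinearOrder α] (H : SimpleGraph V) (r : V → α)
    (hr : Function.Injective r) : GraphOrientation H where
  D u v := H.Adj u v ∧ r u < r v
  adj_of_rel _ _ h := h.1
  rel_of_adj u v h := (lt_or_gt_of_ne (hr.ne h.ne)).imp (⟨h, ·⟩) (⟨h.symm, ·⟩)
  acyclic v hv := lt_irrefl (r v) <| by
    simpa [Relation.transGen_eq_self] using hv.lift r fun _ _ h => h.2

lemma mem_of_mem_reach (O : GraphOrientation H) {A : Set V}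
    (hA : ∀ u v, O.D u v → v ∈ A → u ∈ A) {s t : V} (h : t ∈ O.reach s) (ht : t ∈ A) :
    s ∈ A := by
  induction h with
  | refl => exact ht
  | tail _ hbc ih => exact ih (hA _ _ hbc ht)

lemma reach_subset_reachSet (O : GraphOrientation H) {s : V} {B : Set V} (hs : s ∈ B) :
    O.reach s ⊆ O.reachSet B :=
  Set.subset_biUnion_of_mem (u := O.reach) hs

lemma mem_reachSet_iff (O : GraphOrientation H) {B : Set V} {t : V} :
    t ∈ O.reachSet B ↔ ∃ s ∈ B, t ∈ O.reach s := by
  simp [reachSet]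

end GraphOrientation

section Decomposition

variable {V : Type} {H : SimpleGraph V} {O : GraphOrientation H} {Sp : Set V}
  {ι : Type} {tree : SimpleGraph ι} {bag : ι → Set V}

lemma IsPDTD.exists_median_bag (hT : IsPDTD O Sp tree bag) (a b c : ι) :
    ∃ m, O.reachSet (bag a) ∩ O.reachSet (bag b) ⊆ O.reachSet (bag m) ∧
      O.reachSet (bag b) ∩ O.reachSet (bag c) ⊆ O.reachSet (bag m) ∧
      O.reachSet (bag a) ∩ O.reachSet (bag c) ⊆ O.reachSet (bag m) := by
  obtain ⟨-, htree, -, -, hpath⟩ := hT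
  obtain ⟨m, pab, pbc, pac, hab, hbc, hac, hmab, hmbc, hmac⟩ := htree.1.exists_median a b c
  exact ⟨m, hpath _ _ _ pab hab hmab, hpath _ _ _ pbc hbc hmbc, hpath _ _ _ pac hac hmac⟩

lemma ncard_le_bagWidth [Finite ι] (bag : ι → Set V) (i : ι) : (bag i).ncard ≤ bagWidth bag :=
  le_ciSup (f := fun i => (bag i).ncard) (Set.finite_range _).bddAbove i

lemma urGraph_adj_of_reach {a b t : V} (ha : a ∈ Sp) (hb : b ∈ Sp) (hab : a ≠ b)
    (hta : t ∈ O.reach a) (htb : t ∈ O.reach b) (honly : ∀ σ ∈ Sp, t ∈ O.reach σ → σ = a ∨ σ = b) :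
    (URGraph O Sp).Adj a b := by
  refine ⟨ha, hb, hab, t, ⟨hta, htb⟩, fun ht => ?_⟩
  obtain ⟨σ, ⟨hσ, hσab⟩, htσ⟩ := O.mem_reachSet_iff.mp ht
  exact hσab (honly σ hσ htσ)

lemma exists_mem_pair_of_urGraph_adj {a b : V} (hab : (URGraph O Sp).Adj a b) {B : Set V}
    (hB : B ⊆ Sp) (hsub : O.reach a ∩ O.reach b ⊆ O.reachSet B) : ∃ σ ∈ B, σ = a ∨ σ = b := by
  obtain ⟨-, -, -, t, ht, htout⟩ := hab
  obtain ⟨σ, hσ, htσ⟩ := O.mem_reachSet_iff.mp (hsub ht)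
  refine ⟨σ, hσ, ?_⟩
  by_contra hne
  exact htout (O.mem_reachSet_iff.mpr ⟨σ, ⟨hB hσ, by simpa using hne⟩, htσ⟩)

lemma two_le_bagWidth_of_urGraph_triangle [Finite V] (hT : IsPDTD O Sp tree bag) {a b c : V}
    (hab : (URGraph O Sp).Adj a b) (hbc : (URGraph O Sp).Adj b c)
    (hca : (URGraph O Sp).Adj c a) : 2 ≤ bagWidth bag := by
  have : Finite ι := hT.1
  have hsub := hT.2.2.1
  have hcover := hT.2.2.2.1
  obtain ⟨ia, ha⟩ := Set.mem_iUnion.mp (hcover ▸ hab.1 : a ∈ ⋃ i, bag i)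
  obtain ⟨ib, hb⟩ := Set.mem_iUnion.mp (hcover ▸ hbc.1 : b ∈ ⋃ i, bag i)
  obtain ⟨ic, hc⟩ := Set.mem_iUnion.mp (hcover ▸ hca.1 : c ∈ ⋃ i, bag i)
  obtain ⟨m, hmab, hmbc, hmac⟩ := hT.exists_median_bag ia ib ic
  have hreach {x y : V} {ix iy : ι} (hx : x ∈ bag ix) (hy : y ∈ bag iy)
      (h : O.reachSet (bag ix) ∩ O.reachSet (bag iy) ⊆ O.reachSet (bag m)) :
      O.reach x ∩ O.reach y ⊆ O.reachSet (bag m) :=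
    (Set.inter_subset_inter (O.reach_subset_reachSet hx) (O.reach_subset_reachSet hy)).trans h
  obtain ⟨σ₁, hσ₁, h₁⟩ := exists_mem_pair_of_urGraph_adj hab (hsub m) (hreach ha hb hmab)
  obtain ⟨σ₂, hσ₂, h₂⟩ := exists_mem_pair_of_urGraph_adj hbc (hsub m) (hreach hb hc hmbc)
  obtain ⟨σ₃, hσ₃, h₃⟩ := exists_mem_pair_of_urGraph_adj hca (hsub m) (hreach hc ha
    (Set.inter_comm _ _ ▸ hmac))
  by_contra hw
  have hsingle : (bag m).Subsingleton :=
    Set.ncard_le_one_iff_subsingleton.mp (by have := ncard_le_bagWidth bag m; omega)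
  obtain rfl := hsingle hσ₁ hσ₂
  obtain rfl := hsingle hσ₁ hσ₃
  have := hab.ne; have := hbc.ne; have := hca.ne
  grind

end Decomposition

lemma cycleGraph_adj_iff_val {n : ℕ} (hn : 2 ≤ n) {i j : Fin n} :
    (cycleGraph n).Adj i j ↔ (j.val = i.val + 1 ∨ i.val = j.val + 1 ∨
      (i.val = 0 ∧ j.val = n - 1) ∨ (i.val = n - 1 ∧ j.val = 0)) := by
  have hsub (a b : Fin n) : (a - b).val = 1 ↔ a.val = b.val + 1 ∨ (b.val = n - 1 ∧ a.val = 0) := by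
    rw [Fin.sub_def]
    have := a.isLt; have := b.isLt
    rcases lt_or_ge (n - b.val + a.val) n with h | h
    · rw [Fin.val_mk, Nat.mod_eq_of_lt h]; omega
    · rw [Fin.val_mk, Nat.mod_eq_sub_mod h, Nat.mod_eq_of_lt (by omega)]; omega
  rw [cycleGraph_adj', hsub, hsub]
  omega

/-- The position of the cycle vertex `cᵢ` in the order defining the orientation: first the
sources `c₀, c₂, c₄`, then the sinks `c₁, c₃`, then the directed path `c₅ → ⋯ → cₙ₋₁`. -/
def cycleRank (k : ℕ) : ℕ :=
  if k = 0 then 0 else if k = 2 then 1 else if k = 4 then 2 else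
  if k = 1 then 3 else if k = 3 then 4 else k

lemma cycleRank_injective : Function.Injective cycleRank := by
  intro a b h
  unfold cycleRank at h
  split_ifs at h <;> omega

lemma cycleRank_of_five_le {k : ℕ} (h : 5 ≤ k) : cycleRank k = k := by
  unfold cycleRank
  split_ifs <;> omega

lemma val_cases_of_cycleGraph_adj_of_cycleRank_lt {n : ℕ} (hn : 6 ≤ n) {i j : Fin n}
    (hadj : (cycleGraph n).Adj i j) (hlt : cycleRank i < cycleRank j) :
    (j.val = 1 ∧ (i.val = 0 ∨ i.val = 2)) ∨ (j.val = 3 ∧ (i.val = 2 ∨ i.val = 4)) ∨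
      (5 ≤ j.val ∧ i.val = j.val - 1) ∨ (j.val = n - 1 ∧ i.val = 0) := by
  rw [cycleGraph_adj_iff_val (by omega)] at hadj
  unfold cycleRank at hlt
  split_ifs at hlt <;> omega

section CycleOrientation

open Sum.Lex

variable {V : Type} [Fintype V] {H : SimpleGraph V} {n : ℕ} (e : cycleGraph n ↪g H)

noncomputable def vertexRank (x : V) : ℕ ⊕ₗ ℕ :=
  Function.extend e (fun i => toLex (Sum.inl (cycleRank i))) (fun x => toLex
    (Sum.inr (Fintype.equivFin V x : ℕ))) x

lemma vertexRank_apply (i : Fin n) : vertexRank e (e i) = toLex (Sum.inl (cycleRank i)) :=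
  e.injective.extend_apply _ _ i

lemma vertexRank_of_notMem_range {x : V} (hx : ¬∃ i, e i = x) :
    vertexRank e x = toLex (Sum.inr (Fintype.equivFin V x : ℕ)) :=
  Function.extend_apply' _ _ x hx

lemma vertexRank_injective : Function.Injective (vertexRank e) := by
  intro x y hxy
  by_cases hx : ∃ i, e i = x <;> by_cases hy : ∃ i, e i = y
  · obtain ⟨i, rfl⟩ := hx
    obtain ⟨j, rfl⟩ := hy
    simp only [vertexRank_apply, toLex_inj, Sum.inl.injEq] at hxy
    exact congrArg e (Fin.ext (cycleRank_injective hxy))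
  · obtain ⟨i, rfl⟩ := hx
    simp [vertexRank_apply, vertexRank_of_notMem_range e hy] at hxy
  · obtain ⟨j, rfl⟩ := hy
    simp [vertexRank_apply, vertexRank_of_notMem_range e hx] at hxy
  · simpa [vertexRank_of_notMem_range e hx, vertexRank_of_notMem_range e hy, Fin.val_inj]
      using hxy

noncomputable def cycleOrientation : GraphOrientation H :=
  .ofRank H (vertexRank e) (vertexRank_injective e)

lemma cycleOrientation_D_iff (i j : Fin n) :
    (cycleOrientation e).D (e i) (e j) ↔ (cycleGraph n).Adj i j ∧ cycleRank i < cycleRank j := by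
  simp [cycleOrientation, GraphOrientation.ofRank, vertexRank_apply]

lemma exists_eq_of_cycleOrientation_D {u : V} {j : Fin n} (h : (cycleOrientation e).D u (e j)) :
    ∃ i, e i = u := by
  by_contra hu
  have := h.2
  rw [vertexRank_of_notMem_range e hu, vertexRank_apply] at this
  exact not_inr_lt_inl this

variable {e}

lemma cycleOrientation_D_of_val (hn : 6 ≤ n) {i j : Fin n}
    (hadj : j.val = i.val + 1 ∨ i.val = j.val + 1 ∨
      (i.val = 0 ∧ j.val = n - 1) ∨ (i.val = n - 1 ∧ j.val = 0))
    (hlt : cycleRank i < cycleRank j) : (cycleOrientation e).D (e i) (e j) :=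
  (cycleOrientation_D_iff e i j).mpr ⟨(cycleGraph_adj_iff_val (by omega)).mpr hadj, hlt⟩

lemma cycleOrientation_mem_sources_iff (hn : 6 ≤ n) (k : Fin n) :
    e k ∈ (cycleOrientation e).sources ↔ k.val = 0 ∨ k.val = 2 ∨ k.val = 4 := by
  constructor
  · intro hk
    by_contra hk'
    refine hk (e ⟨k.val - 1, by omega⟩) (cycleOrientation_D_of_val hn (by simp; omega) ?_)
    show cycleRank (k.val - 1) < cycleRank k.val
    unfold cycleRank
    split_ifs <;> omega
  · intro hk u hu
    obtain ⟨i, rfl⟩ := exists_eq_of_cycleOrientation_D e hu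
    obtain ⟨hadj, hlt⟩ := (cycleOrientation_D_iff e i k).mp hu
    have := val_cases_of_cycleGraph_adj_of_cycleRank_lt hn hadj hlt
    omega

lemma cycleOrientation_exists_source_of_mem_reach (hn : 6 ≤ n) (S : Set (Fin n))
    (hS : ∀ i j, j ∈ S → (cycleGraph n).Adj i j → cycleRank i < cycleRank j → i ∈ S)
    {σ : V} (hσ : σ ∈ (cycleOrientation e).sources) {j : Fin n} (hj : j ∈ S)
    (h : e j ∈ (cycleOrientation e).reach σ) :
    ∃ i ∈ S, σ = e i ∧ (i.val = 0 ∨ i.val = 2 ∨ i.val = 4) := by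
  have hclosed : ∀ u v, (cycleOrientation e).D u v → v ∈ e '' S → u ∈ e '' S := by
    rintro u _ huv ⟨j, hj, rfl⟩
    obtain ⟨i, rfl⟩ := exists_eq_of_cycleOrientation_D e huv
    obtain ⟨hadj, hlt⟩ := (cycleOrientation_D_iff e i j).mp huv
    exact ⟨i, hS i j hj hadj hlt, rfl⟩
  obtain ⟨i, hi, rfl⟩ := (cycleOrientation e).mem_of_mem_reach hclosed h ⟨j, hj, rfl⟩
  exact ⟨i, hi, rfl, (cycleOrientation_mem_sources_iff hn i).mp hσ⟩

lemma cycleOrientation_mem_reach_four (hn : 6 ≤ n) {k : ℕ} (hk : 4 ≤ k) (hkn : k < n) :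
    e ⟨k, hkn⟩ ∈ (cycleOrientation e).reach (e ⟨4, by omega⟩) := by
  induction k, hk using Nat.le_induction with
  | base => exact .refl
  | succ m hm ih =>
    refine .tail (ih (by omega)) (cycleOrientation_D_of_val hn (by simp) ?_)
    show cycleRank m < cycleRank (m + 1)
    rcases hm.eq_or_lt with rfl | hm
    · decide
    · rw [cycleRank_of_five_le hm, cycleRank_of_five_le (by omega)]
      omega

lemma cycleOrientation_urGraph_adj (hn : 6 ≤ n) {a b t : Fin n} (hab : a ≠ b)
    (ha : a.val = 0 ∨ a.val = 2 ∨ a.val = 4) (hb : b.val = 0 ∨ b.val = 2 ∨ b.val = 4)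
    (hta : e t ∈ (cycleOrientation e).reach (e a)) (htb : e t ∈ (cycleOrientation e).reach (e b))
    (S : Set (Fin n))
    (hS : ∀ i j, j ∈ S → (cycleGraph n).Adj i j → cycleRank i < cycleRank j → i ∈ S)
    (ht : t ∈ S) (hSab : ∀ i ∈ S, (i.val = 0 ∨ i.val = 2 ∨ i.val = 4) → i = a ∨ i = b) :
    (URGraph (cycleOrientation e) (cycleOrientation e).sources).Adj (e a) (e b) := by
  refine urGraph_adj_of_reach ((cycleOrientation_mem_sources_iff hn a).mpr ha)
    ((cycleOrientation_mem_sources_iff hn b).mpr hb) (e.injective.ne hab) hta htb ?_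
  intro σ hσ h
  obtain ⟨i, hi, rfl, hsrc⟩ := cycleOrientation_exists_source_of_mem_reach hn S hS hσ ht h
  exact (hSab i hi hsrc).imp (congrArg e) (congrArg e)

lemma cycleOrientation_urGraph_adj_zero_two (hn : 6 ≤ n) :
    (URGraph (cycleOrientation e) (cycleOrientation e).sources).Adj
      (e ⟨0, by omega⟩) (e ⟨2, by omega⟩) := by
  refine cycleOrientation_urGraph_adj hn (t := ⟨1, by omega⟩) (by simp) (by simp) (by simp)
    (.single (cycleOrientation_D_of_val hn (by simp) (by simp [cycleRank])))
    (.single (cycleOrientation_D_of_val hn (by simp) (by simp [cycleRank])))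
    {i | i.val ≤ 2} ?_ (by simp) ?_
  · intro i j hj hadj hlt
    have := val_cases_of_cycleGraph_adj_of_cycleRank_lt hn hadj hlt
    simp only [Set.mem_ofPred_eq] at hj ⊢
    omega
  · intro i hi hsrc
    simp only [Set.mem_ofPred_eq, Fin.ext_iff] at hi ⊢
    omega

lemma cycleOrientation_urGraph_adj_two_four (hn : 6 ≤ n) :
    (URGraph (cycleOrientation e) (cycleOrientation e).sources).Adj
      (e ⟨2, by omega⟩) (e ⟨4, by omega⟩) := by
  refine cycleOrientation_urGraph_adj hn (t := ⟨3, by omega⟩) (by simp) (by simp) (by simp)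
    (.single (cycleOrientation_D_of_val hn (by simp) (by simp [cycleRank])))
    (.single (cycleOrientation_D_of_val hn (by simp) (by simp [cycleRank])))
    {i | 2 ≤ i.val ∧ i.val ≤ 4} ?_ (by simp) ?_
  · intro i j hj hadj hlt
    have := val_cases_of_cycleGraph_adj_of_cycleRank_lt hn hadj hlt
    simp only [Set.mem_ofPred_eq] at hj ⊢
    omega
  · intro i hi hsrc
    simp only [Set.mem_ofPred_eq, Fin.ext_iff] at hi ⊢
    omega

lemma cycleOrientation_urGraph_adj_four_zero (hn : 6 ≤ n) :
    (URGraph (cycleOrientation e) (cycleOrientation e).sources).Adj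
      (e ⟨4, by omega⟩) (e ⟨0, by omega⟩) := by
  refine cycleOrientation_urGraph_adj hn (t := ⟨n - 1, by omega⟩) (by simp) (by simp) (by simp)
    (cycleOrientation_mem_reach_four hn (by omega) _)
    (.single (cycleOrientation_D_of_val hn (by simp) ?_))
    {i | i.val = 0 ∨ 4 ≤ i.val} ?_ (by show n - 1 = 0 ∨ 4 ≤ n - 1; omega) ?_
  · show cycleRank 0 < cycleRank (n - 1)
    rw [cycleRank_of_five_le (k := n - 1) (by omega)]
    show 0 < n - 1
    omega
  · intro i j hj hadj hlt
    have := val_cases_of_cycleGraph_adj_of_cycleRank_lt hn hadj hlt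
    simp only [Set.mem_ofPred_eq] at hj ⊢
    omega
  · intro i hi hsrc
    simp only [Set.mem_ofPred_eq, Fin.ext_iff] at hi ⊢
    omega

end CycleOrientation

/-- If a simple graph `H` contains an induced cycle of length at
least 6, then there is an acyclic orientation of `H` all of whose DAG tree
decompositions have width at least 2 (i.e. `dtw(H) ≥ 2`). -/
theorem dtw_ge_two_of_licl_ge_six {V : Type} [Fintype V] (H : SimpleGraph V)
    (hlicl : ∃ n : ℕ, 6 ≤ n ∧ HasInducedCycleOfLength H n) :
    ∃ O : GraphOrientation H, ∀ (ι : Type) (tree : SimpleGraph ι) (bag : ι → Set V),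
      IsPDTD O O.sources tree bag → 2 ≤ bagWidth bag := by
  obtain ⟨n, hn, ⟨e⟩⟩ := hlicl
  exact ⟨cycleOrientation e, fun ι tree bag hT => two_le_bagWidth_of_urGraph_triangle hT
    (cycleOrientation_urGraph_adj_zero_two hn) (cycleOrientation_urGraph_adj_two_four hn)
    (cycleOrientation_urGraph_adj_four_zero hn)⟩
end

section
/- Let G be a finite simple graph with vertex set {u_1, …, u_n}, let ℓ ≥ 2 and q ∈ {0,1,2}, and set r = 3ℓ + q (so r ≥ 6). Define the simple graph G_core as follows: its vertex set contains three pairwise disjoint copies V1 = {w_1,…,w_n}, V2 = {x_1,…,x_n}, V3 = {y_1,…,y_n} of V(G), with no edges inside V1 ∪ V2 ∪ V3; and for every edge e = {u_i, u_j} of G one adds six paths whose internal vertices are new and distinct across all paths: a path of length ℓ from w_i to x_j, a path of length ℓ from w_j to x_i, a path of length ℓ + ⌊q/2⌋ from x_i to y_j, a path of length ℓ + ⌊q/2⌋ from x_j to y_i, a path of length ℓ + ⌊(q+1)/2⌋ from w_i to y_j, and a path of length ℓ + ⌊(q+1)/2⌋ from w_j to y_i; these path edges are all the edges of G_core. Let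 P′ be the partition of V(G_core) whose parts are V1, V2, V3 together with, for each of the three pairs (V1,V2), (V2,V3), (V1,V3) and each internal position i along the corresponding paths, the set of all internal vertices of those paths at distance i along the path from the endpoint in the first set of the pair; P′ has exactly r parts. Then the number of subgraphs of G_core that are cycles of length r containing exactly one vertex from each part of P′ equals 6 times the number of triangles in G. -/
/-- The three classes of connecting paths in the core construction: between the
first and second copies (`AB`, i.e. `V1`–`V2`), the second and third (`BC`, i.e.
`V2`–`V3`), and the first and third (`AC`, i.e. `V1`–`V3`). -/
inductive PairClass : Type
  | AB | BC | AC

/-- The number of internal vertices of a connecting path of class `c`: the path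
lengths are `ℓ`, `ℓ + ⌊q/2⌋` and `ℓ + ⌊(q+1)/2⌋` respectively. -/
def inLen (ℓ q : ℕ) : PairClass → ℕ
  | .AB => ℓ - 1
  | .BC => ℓ + q / 2 - 1
  | .AC => ℓ + (q + 1) / 2 - 1

/-- The copy of `V(G)` in which a path of class `c` starts. -/
def srcCopy : PairClass → Fin 3
  | .AB => 0
  | .BC => 1
  | .AC => 0

/-- The copy of `V(G)` in which a path of class `c` ends. -/
def dstCopy : PairClass → Fin 3
  | .AB => 1
  | .BC => 2
  | .AC => 2

/-- The vertices of the core graph `G_core`: three copies of `V(G)` together with,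
for every class `c`, every ordered adjacent pair `(a, b)` of `G`, the internal
vertices (indexed by their position) of a path of class `c` associated to `(a,b)`. -/
def CoreV (V : Type) (G : SimpleGraph V) (ℓ q : ℕ) : Type :=
  (Fin 3 × V) ⊕ (Σ c : PairClass, {p : V × V // G.Adj p.1 p.2} × Fin (inLen ℓ q c))

/-- The base edge relation of the core graph: for every class `c` and every ordered
adjacent pair `e = (a, b)` of `G`, a path from the vertex `(srcCopy c, a)` through
the internal vertices `(c, e, 0), (c, e, 1), …` to the vertex `(dstCopy c, b)`. -/
def coreRel {V : Type} (G : SimpleGraph V) (ℓ q : ℕ) :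
    CoreV V G ℓ q → CoreV V G ℓ q → Prop := fun x y =>
  ∃ (c : PairClass) (e : {p : V × V // G.Adj p.1 p.2}) (i : Fin (inLen ℓ q c)),
    ((i : ℕ) = 0 ∧ x = Sum.inl (srcCopy c, e.1.1) ∧ y = Sum.inr ⟨c, e, i⟩) ∨
    ((i : ℕ) = inLen ℓ q c - 1 ∧ x = Sum.inr ⟨c, e, i⟩ ∧
      y = Sum.inl (dstCopy c, e.1.2)) ∨
    (∃ j : Fin (inLen ℓ q c), (j : ℕ) = (i : ℕ) + 1 ∧
      x = Sum.inr ⟨c, e, i⟩ ∧ y = Sum.inr ⟨c, e, j⟩)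

/-- The core graph `G_core` of the lower-bound construction. -/
def coreGraph {V : Type} (G : SimpleGraph V) (ℓ q : ℕ) :
    SimpleGraph (CoreV V G ℓ q) :=
  SimpleGraph.fromRel (coreRel G ℓ q)

/-- The partition `P'` of the vertices of `G_core`, given as the fibers of this map:
the three copies `V1`, `V2`, `V3` of `V(G)`, and for each path class and each
internal position along those paths, the set of all internal path vertices of that
class at that position. -/
def corePart {V : Type} (G : SimpleGraph V) (ℓ q : ℕ) :
    CoreV V G ℓ q → Fin 3 ⊕ Σ c : PairClass, Fin (inLen ℓ q c)
  | Sum.inl (t, _) => Sum.inl t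
  | Sum.inr ⟨c, _, i⟩ => Sum.inr ⟨c, i⟩
/-!
Each ordered triangle `(a, b, c)` of `G` determines a cycle through `w_a`, `x_b`, `y_c` made of the
paths attached to `ab`, `bc` and `ac`, and every required cycle arises from exactly one ordered
triangle; an unordered triangle has `3! = 6` orderings.

Numbering the parts of `P′` by their positions modulo `r` along such a cycle (`V1` at `0`, `V2` at
`ℓ`, `V3` at `2ℓ + ⌊q/2⌋`, the `V1`–`V3` paths traversed backwards) makes the part map a graph
homomorphism from `G_core` to the `r`-cycle, bijective on the vertices of the cycle of a triangle;
this identifies that cycle with `C_r`. Conversely, an internal path vertex has only its two path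
neighbours in `G_core`, so a cycle through it contains both. A cycle meeting every part therefore
contains the whole path through each internal vertex it meets, and since it meets each of `V1`,
`V2`, `V3` only once, the three paths it contains close up into a triangle.
-/

open SimpleGraph

open Nat in
theorem SimpleGraph.card_pairwise_adj_eq_factorial_mul {V : Type*} (G : SimpleGraph V) (n : ℕ) :
    Nat.card {f : Fin n → V // Pairwise fun i j => G.Adj (f i) (f j)} =
      n ! * Nat.card {s : Finset V // G.IsNClique n s} := by
  classical
  have injective (f : {f : Fin n → V // Pairwise fun i j => G.Adj (f i) (f j)}) :
      Function.Injective f.1 := fun i j h => by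
    by_contra hij
    exact G.ne_of_adj (f.2 hij) h
  let vertexSet (f : {f : Fin n → V // Pairwise fun i j => G.Adj (f i) (f j)}) :
      {s : Finset V // G.IsNClique n s} :=
    ⟨Finset.univ.image f.1, by
      refine ⟨?_, by rw [Finset.card_image_of_injective _ (injective f), Finset.card_fin]⟩
      simp only [Finset.coe_image, Finset.coe_univ, Set.image_univ]
      rintro _ ⟨i, rfl⟩ _ ⟨j, rfl⟩ hij
      exact f.2 fun h => hij (congrArg f.1 h)⟩
  have fiber (s : {s : Finset V // G.IsNClique n s}) : {f // vertexSet f = s} ≃ (Fin n ≃ s.1) :=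
    { toFun f := Equiv.ofBijective
        (fun i => ⟨f.1.1 i, by
          rw [← congrArg Subtype.val f.2]; exact Finset.mem_image_of_mem _ (Finset.mem_univ i)⟩)
        ((Fintype.bijective_iff_injective_and_card _).2
          ⟨fun i j h => injective f.1 (congrArg Subtype.val h), by simp [s.2.card_eq]⟩)
      invFun σ := ⟨⟨fun i => σ i, fun i j hij =>
        s.2.isClique (σ i).2 (σ j).2 (by simpa using hij)⟩, by
          refine Subtype.ext (Finset.ext fun x => ⟨fun hx => ?_, fun hx => ?_⟩)
          · obtain ⟨i, -, rfl⟩ := Finset.mem_image.1 hx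
            exact (σ i).2
          · exact Finset.mem_image.2 ⟨σ.symm ⟨x, hx⟩, Finset.mem_univ _, by simp⟩⟩
      left_inv _ := rfl
      right_inv _ := Equiv.ext fun _ => rfl }
  have fiber_perm (s : {s : Finset V // G.IsNClique n s}) :
      {f // vertexSet f = s} ≃ Equiv.Perm (Fin n) :=
    (fiber s).trans (Equiv.equivCongr (Equiv.refl _) (s.1.equivFinOfCardEq s.2.card_eq))
  rw [← Nat.card_congr (Equiv.sigmaFiberEquiv vertexSet),
    Nat.card_congr (Equiv.sigmaCongrRight fiber_perm), Nat.card_congr (Equiv.sigmaEquivProd _ _),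
    Nat.card_prod, Nat.card_perm, Nat.card_fin, mul_comm]

theorem SimpleGraph.cycleGraph_adj_iff_eq_add_one {n : ℕ} [NeZero n] (hn : 2 ≤ n) {u v : Fin n} :
    (cycleGraph n).Adj u v ↔ u = v + 1 ∨ v = u + 1 := by
  obtain ⟨m, rfl⟩ : ∃ m, n = m + 2 := ⟨n - 2, by omega⟩
  rw [cycleGraph_adj, sub_eq_iff_eq_add, sub_eq_iff_eq_add, add_comm 1, add_comm 1]

theorem SimpleGraph.Subgraph.ncard_neighborSet_eq_two {W : Type*} {H : SimpleGraph W}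
    {M : H.Subgraph} {n : ℕ} (hn : 3 ≤ n) (φ : cycleGraph n ≃g M.coe) {v : W}
    (hv : v ∈ M.verts) : (M.neighborSet v).ncard = 2 := by
  obtain ⟨m, rfl⟩ : ∃ m, n = m + 3 := ⟨n - 3, by omega⟩
  rw [← Nat.card_coe_set_eq, ← Nat.card_congr (M.coeNeighborSetEquiv ⟨v, hv⟩),
    Nat.card_congr (φ.symm.mapNeighborSet _), Nat.card_eq_fintype_card,
    card_neighborSet_eq_degree, cycleGraph_degree_three_le]

theorem SimpleGraph.Subgraph.adj_iff_of_neighborSet_subset {W : Type*} {H : SimpleGraph W}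
    {M : H.Subgraph} {v w : W} {s : Set W} (hs : H.neighborSet v ⊆ s) (hfin : s.Finite)
    (hcard : s.ncard ≤ (M.neighborSet v).ncard) : M.Adj v w ↔ H.Adj v w := by
  have : M.neighborSet v = s :=
    Set.eq_of_subset_of_ncard_le ((M.neighborSet_subset v).trans hs) hcard hfin
  exact ⟨fun h => M.adj_sub h, fun h => (this.symm ▸ hs h : w ∈ M.neighborSet v)⟩

def PairClass.equivFin : PairClass ≃ Fin 3 where
  toFun
    | .AB => 0
    | .BC => 1
    | .AC => 2
  invFun := ![.AB, .BC, .AC]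
  left_inv c := by cases c <;> rfl
  right_inv i := by fin_cases i <;> rfl

instance : Fintype PairClass := Fintype.ofEquiv _ PairClass.equivFin.symm

abbrev PartIndex (ℓ q : ℕ) : Type := Fin 3 ⊕ Σ c : PairClass, Fin (inLen ℓ q c)

variable {V : Type} {G : SimpleGraph V} {ℓ q : ℕ}

lemma srcCopy_ne_dstCopy (c : PairClass) : srcCopy c ≠ dstCopy c := by
  cases c <;> decide

lemma inLen_pos (hℓ : 2 ≤ ℓ) (c : PairClass) : 0 < inLen ℓ q c := by
  cases c <;> simp only [inLen] <;> omega

lemma CoreV.inr_inj {c c' : PairClass} {e e' : {p : V × V // G.Adj p.1 p.2}}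
    {i : Fin (inLen ℓ q c)} {i' : Fin (inLen ℓ q c')}
    (h : (Sum.inr ⟨c, e, i⟩ : CoreV V G ℓ q) = .inr ⟨c', e', i'⟩) :
    c = c' ∧ e = e' ∧ (i : ℕ) = i' := by
  obtain ⟨rfl, h⟩ := Sigma.mk.inj_iff.1 (Sum.inr_injective h)
  obtain ⟨rfl, rfl⟩ := Prod.mk.inj (eq_of_heq h)
  exact ⟨rfl, rfl, rfl⟩

lemma exists_eq_inl_of_corePart_eq {v : CoreV V G ℓ q} {k : Fin 3}
    (h : corePart G ℓ q v = .inl k) : ∃ a, v = .inl (k, a) := by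
  rcases v with ⟨k', a⟩ | ⟨c, e, i⟩
  · exact ⟨a, by rw [Sum.inl_injective h]⟩
  · exact absurd h Sum.inr_ne_inl

lemma exists_eq_inr_of_corePart_eq {v : CoreV V G ℓ q} {c : PairClass} {i : Fin (inLen ℓ q c)}
    (h : corePart G ℓ q v = .inr ⟨c, i⟩) : ∃ e, v = .inr ⟨c, e, i⟩ := by
  rcases v with ⟨k, a⟩ | ⟨c', e, i'⟩
  · exact absurd h Sum.inl_ne_inr
  · obtain ⟨rfl, h⟩ := Sigma.mk.inj_iff.1 (Sum.inr_injective h)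
    exact ⟨e, by rw [eq_of_heq h]⟩

/-- The vertex at distance `j ≤ inLen ℓ q c + 1` from the `srcCopy c` end of the path of class `c`
attached to `e`. -/
def pathVert (c : PairClass) (e : {p : V × V // G.Adj p.1 p.2}) : ℕ → CoreV V G ℓ q
  | 0 => .inl (srcCopy c, e.1.1)
  | j + 1 => if h : j < inLen ℓ q c then .inr ⟨c, e, ⟨j, h⟩⟩ else .inl (dstCopy c, e.1.2)

def pathPart (c : PairClass) : ℕ → PartIndex ℓ q
  | 0 => .inl (srcCopy c)
  | j + 1 => if h : j < inLen ℓ q c then .inr ⟨c, ⟨j, h⟩⟩ else .inl (dstCopy c)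

lemma corePart_pathVert (c : PairClass) (e : {p : V × V // G.Adj p.1 p.2}) (j : ℕ) :
    corePart G ℓ q (pathVert c e j) = pathPart c j := by
  cases j with
  | zero => rfl
  | succ j => by_cases h : j < inLen ℓ q c <;> simp [pathVert, pathPart, h, corePart]

lemma pathVert_succ (c : PairClass) (e : {p : V × V // G.Adj p.1 p.2}) (i : Fin (inLen ℓ q c)) :
    (pathVert c e (i + 1) : CoreV V G ℓ q) = .inr ⟨c, e, i⟩ :=
  dif_pos i.2

lemma pathVert_succ_of_inLen_le (c : PairClass) (e : {p : V × V // G.Adj p.1 p.2}) {j : ℕ}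
    (hj : inLen ℓ q c ≤ j) : (pathVert c e (j + 1) : CoreV V G ℓ q) = .inl (dstCopy c, e.1.2) :=
  dif_neg hj.not_gt

lemma pathPart_succ (c : PairClass) (i : Fin (inLen ℓ q c)) :
    (pathPart c (i + 1) : PartIndex ℓ q) = .inr ⟨c, i⟩ :=
  dif_pos i.2

lemma pathPart_succ_of_inLen_le (c : PairClass) {j : ℕ} (hj : inLen ℓ q c ≤ j) :
    (pathPart c (j + 1) : PartIndex ℓ q) = .inl (dstCopy c) :=
  dif_neg hj.not_gt

lemma eq_of_pathVert_eq_inr {c c' : PairClass} {e e' : {p : V × V // G.Adj p.1 p.2}} {j : ℕ}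
    {i : Fin (inLen ℓ q c)} (h : pathVert c' e' j = .inr ⟨c, e, i⟩) :
    c' = c ∧ e' = e ∧ j = i + 1 := by
  cases j with
  | zero => exact absurd h Sum.inl_ne_inr
  | succ j =>
    by_cases hj : j < inLen ℓ q c'
    · rw [show j = (⟨j, hj⟩ : Fin (inLen ℓ q c')) from rfl, pathVert_succ] at h
      obtain ⟨rfl, rfl, hji⟩ := CoreV.inr_inj h
      exact ⟨rfl, rfl, congrArg (· + 1) hji⟩
    · rw [pathVert_succ_of_inLen_le c' e' (not_lt.1 hj)] at h
      exact absurd h Sum.inl_ne_inr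

lemma coreRel_iff (hℓ : 2 ≤ ℓ) {x y : CoreV V G ℓ q} :
    coreRel G ℓ q x y ↔
      ∃ c e, ∃ j ≤ inLen ℓ q c, x = pathVert c e j ∧ y = pathVert c e (j + 1) := by
  constructor
  · rintro ⟨c, e, i, ⟨hi, rfl, rfl⟩ | ⟨hi, rfl, rfl⟩ | ⟨j, hj, rfl, rfl⟩⟩
    · refine ⟨c, e, 0, Nat.zero_le _, rfl, ?_⟩
      rw [← pathVert_succ, hi]
    · exact ⟨c, e, i + 1, i.2, (pathVert_succ c e i).symm,
        (pathVert_succ_of_inLen_le c e (by omega)).symm⟩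
    · refine ⟨c, e, i + 1, i.2, (pathVert_succ c e i).symm, ?_⟩
      rw [← hj, pathVert_succ]
  · rintro ⟨c, e, j, hj, rfl, rfl⟩
    have hlen := inLen_pos (q := q) hℓ c
    rcases Nat.eq_zero_or_pos j with rfl | hj0
    · exact ⟨c, e, ⟨0, hlen⟩, Or.inl ⟨rfl, rfl, pathVert_succ c e ⟨0, hlen⟩⟩⟩
    obtain ⟨i, rfl⟩ : ∃ i : Fin (inLen ℓ q c), j = i + 1 := ⟨⟨j - 1, by omega⟩, by simp; omega⟩
    refine ⟨c, e, i, Or.inr ?_⟩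
    rcases Nat.lt_or_ge ((i : ℕ) + 1) (inLen ℓ q c) with h | h
    · exact Or.inr ⟨⟨i + 1, h⟩, rfl, pathVert_succ c e i, pathVert_succ c e ⟨i + 1, h⟩⟩
    · exact Or.inl ⟨by omega, pathVert_succ c e i, pathVert_succ_of_inLen_le c e h⟩

lemma coreRel_ne {x y : CoreV V G ℓ q} (h : coreRel G ℓ q x y) : x ≠ y := by
  rintro rfl
  obtain ⟨c, e, i, ⟨-, rfl, h⟩ | ⟨-, rfl, h⟩ | ⟨j, hj, rfl, h⟩⟩ := h
  · exact Sum.inl_ne_inr h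
  · exact Sum.inr_ne_inl h
  · have := (CoreV.inr_inj h).2.2
    omega

lemma coreGraph_adj_iff (hℓ : 2 ≤ ℓ) {x y : CoreV V G ℓ q} :
    (coreGraph G ℓ q).Adj x y ↔ ∃ c e, ∃ j ≤ inLen ℓ q c,
      (x = pathVert c e j ∧ y = pathVert c e (j + 1)) ∨
        (y = pathVert c e j ∧ x = pathVert c e (j + 1)) := by
  simp only [coreGraph, fromRel_adj, coreRel_iff hℓ]
  constructor
  · rintro ⟨-, ⟨c, e, j, hj, h⟩ | ⟨c, e, j, hj, h⟩⟩
    exacts [⟨c, e, j, hj, Or.inl h⟩, ⟨c, e, j, hj, Or.inr h⟩]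
  · rintro ⟨c, e, j, hj, h | h⟩
    · exact ⟨coreRel_ne ((coreRel_iff hℓ).2 ⟨c, e, j, hj, h⟩), Or.inl ⟨c, e, j, hj, h⟩⟩
    · exact ⟨(coreRel_ne ((coreRel_iff hℓ).2 ⟨c, e, j, hj, h⟩)).symm, Or.inr ⟨c, e, j, hj, h⟩⟩

lemma isRight_or_isRight_of_coreRel {x y : CoreV V G ℓ q} (h : coreRel G ℓ q x y) :
    x.isRight ∨ y.isRight := by
  obtain ⟨c, e, i, ⟨-, -, rfl⟩ | ⟨-, rfl, -⟩ | ⟨-, -, rfl, -⟩⟩ := h <;> simp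

lemma isRight_or_isRight_of_coreGraph_adj {x y : CoreV V G ℓ q}
    (h : (coreGraph G ℓ q).Adj x y) : x.isRight ∨ y.isRight := by
  obtain ⟨-, h | h⟩ := h
  exacts [isRight_or_isRight_of_coreRel h, (isRight_or_isRight_of_coreRel h).symm]

lemma coreGraph_neighborSet_inr_subset (hℓ : 2 ≤ ℓ) (c : PairClass)
    (e : {p : V × V // G.Adj p.1 p.2}) (i : Fin (inLen ℓ q c)) :
    (coreGraph G ℓ q).neighborSet (.inr ⟨c, e, i⟩) ⊆ {pathVert c e i, pathVert c e (i + 2)} := by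
  intro y hy
  obtain ⟨c', e', j, -, ⟨hx, rfl⟩ | ⟨rfl, hx⟩⟩ := (coreGraph_adj_iff hℓ).1 hy
  · obtain ⟨rfl, rfl, rfl⟩ := eq_of_pathVert_eq_inr hx.symm
    exact Or.inr rfl
  · obtain ⟨rfl, rfl, hj⟩ := eq_of_pathVert_eq_inr hx.symm
    obtain rfl : j = i := by omega
    exact Or.inl rfl

abbrev OrderedTriangle (G : SimpleGraph V) : Type :=
  {t : Fin 3 → V // Pairwise fun i j => G.Adj (t i) (t j)}

def OrderedTriangle.edge (t : OrderedTriangle G) (c : PairClass) :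
    {p : V × V // G.Adj p.1 p.2} :=
  ⟨(t.1 (srcCopy c), t.1 (dstCopy c)), t.2 (srcCopy_ne_dstCopy c)⟩

def triangleCycleVert (t : OrderedTriangle G) : PartIndex ℓ q → CoreV V G ℓ q
  | .inl k => .inl (k, t.1 k)
  | .inr ⟨c, i⟩ => .inr ⟨c, t.edge c, i⟩

def triangleCycle (t : OrderedTriangle G) : (coreGraph G ℓ q).Subgraph :=
  (⊤ : (coreGraph G ℓ q).Subgraph).induce (Set.range (triangleCycleVert t))

lemma corePart_triangleCycleVert (t : OrderedTriangle G) (p : PartIndex ℓ q) :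
    corePart G ℓ q (triangleCycleVert t p) = p := by
  rcases p with k | ⟨c, i⟩ <;> rfl

lemma triangleCycleVert_pathPart (t : OrderedTriangle G) (c : PairClass) (j : ℕ) :
    (triangleCycleVert t (pathPart c j) : CoreV V G ℓ q) = pathVert c (t.edge c) j := by
  cases j with
  | zero => rfl
  | succ j =>
    by_cases h : j < inLen ℓ q c
    · rw [show j = (⟨j, h⟩ : Fin (inLen ℓ q c)) from rfl, pathPart_succ, pathVert_succ]; rfl
    · rw [pathPart_succ_of_inLen_le c (not_lt.1 h),
        pathVert_succ_of_inLen_le _ _ (not_lt.1 h)]; rfl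

lemma existsUnique_mem_triangleCycle_verts (t : OrderedTriangle G) (p : PartIndex ℓ q) :
    ∃! v : CoreV V G ℓ q, v ∈ (triangleCycle t).verts ∧ corePart G ℓ q v = p := by
  refine ⟨triangleCycleVert t p, ⟨⟨p, rfl⟩, corePart_triangleCycleVert t p⟩, ?_⟩
  rintro _ ⟨⟨p', rfl⟩, rfl⟩
  rw [corePart_triangleCycleVert]

lemma triangleCycle_injective :
    Function.Injective (triangleCycle : OrderedTriangle G → (coreGraph G ℓ q).Subgraph) := by
  intro t t' h
  refine Subtype.ext (funext fun k => ?_)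
  have hk : triangleCycleVert t (.inl k) ∈ (triangleCycle (ℓ := ℓ) (q := q) t').verts :=
    h ▸ ⟨.inl k, rfl⟩
  obtain ⟨p, hp⟩ := hk
  obtain rfl : p = .inl k := by rw [← corePart_triangleCycleVert t' p, hp]; rfl
  exact (Prod.mk.inj (Sum.inl_injective hp)).2.symm

section Position

open Fin.CommRing

variable (ℓ q) [NeZero (3 * ℓ + q)]

def pathPos : PairClass → ℕ → Fin (3 * ℓ + q)
  | .AB, j => (j : ℕ)
  | .BC, j => (ℓ + j : ℕ)
  | .AC, j => -(j : ℕ)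

def partPos : PartIndex ℓ q → Fin (3 * ℓ + q)
  | .inl k => ![0, (ℓ : ℕ), (2 * ℓ + q / 2 : ℕ)] k
  | .inr ⟨c, i⟩ => pathPos ℓ q c (i + 1)

variable {ℓ q}

lemma pathPos_succ (c : PairClass) (j : ℕ) :
    pathPos ℓ q c (j + 1) = pathPos ℓ q c j + 1 ∨
      pathPos ℓ q c j = pathPos ℓ q c (j + 1) + 1 := by
  cases c
  · left; simp [pathPos]
  · left; simp [pathPos, add_assoc]
  · right; simp [pathPos]

lemma partPos_pathPart (hℓ : 2 ≤ ℓ) (c : PairClass) {j : ℕ} (hj : j ≤ inLen ℓ q c + 1) :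
    partPos ℓ q (pathPart c j) = pathPos ℓ q c j := by
  cases j with
  | zero => cases c <;> simp [pathPart, partPos, pathPos, srcCopy]
  | succ j =>
    by_cases h : j < inLen ℓ q c
    · rw [pathPart, dif_pos h]; rfl
    obtain rfl : j = inLen ℓ q c := by omega
    rw [pathPart_succ_of_inLen_le c le_rfl]
    cases c
    · show ((ℓ : ℕ) : Fin (3 * ℓ + q)) = ((ℓ - 1 + 1 : ℕ) : Fin (3 * ℓ + q))
      rw [Nat.sub_add_cancel (by omega)]
    · show ((2 * ℓ + q / 2 : ℕ) : Fin (3 * ℓ + q)) =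
        ((ℓ + (ℓ + q / 2 - 1 + 1) : ℕ) : Fin (3 * ℓ + q))
      congr 1; omega
    · show ((2 * ℓ + q / 2 : ℕ) : Fin (3 * ℓ + q)) =
        -((ℓ + (q + 1) / 2 - 1 + 1 : ℕ) : Fin (3 * ℓ + q))
      rw [eq_neg_iff_add_eq_zero, ← Nat.cast_add,
        show 2 * ℓ + q / 2 + (ℓ + (q + 1) / 2 - 1 + 1) = 3 * ℓ + q by omega, Fin.natCast_self]

lemma cycleGraph_adj_partPos_of_coreGraph_adj (hℓ : 2 ≤ ℓ) {x y : CoreV V G ℓ q}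
    (h : (coreGraph G ℓ q).Adj x y) :
    (cycleGraph (3 * ℓ + q)).Adj (partPos ℓ q (corePart G ℓ q x))
      (partPos ℓ q (corePart G ℓ q y)) := by
  obtain ⟨c, e, j, hj, ⟨rfl, rfl⟩ | ⟨rfl, rfl⟩⟩ := (coreGraph_adj_iff hℓ).1 h <;>
  · simp only [corePart_pathVert, partPos_pathPart hℓ c (by omega : j ≤ inLen ℓ q c + 1),
      partPos_pathPart hℓ c (by omega : j + 1 ≤ inLen ℓ q c + 1),
      cycleGraph_adj_iff_eq_add_one (by omega : 2 ≤ 3 * ℓ + q)]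
    have := pathPos_succ (ℓ := ℓ) (q := q) c j
    tauto

lemma exists_pathPos_eq (k : Fin (3 * ℓ + q)) : ∃ c, ∃ j ≤ inLen ℓ q c,
    (pathPos ℓ q c j = k ∧ pathPos ℓ q c (j + 1) = k + 1) ∨
      (pathPos ℓ q c (j + 1) = k ∧ pathPos ℓ q c j = k + 1) := by
  have hk := Fin.cast_val_eq_self k
  obtain hk' | hk' | hk' :
      (k : ℕ) < ℓ ∨ ℓ ≤ (k : ℕ) ∧ (k : ℕ) < 2 * ℓ + q / 2 ∨ 2 * ℓ + q / 2 ≤ (k : ℕ) := by omega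
  · refine ⟨.AB, k, by simp only [inLen]; omega, Or.inl ⟨hk, ?_⟩⟩
    simp only [pathPos, Nat.cast_succ, hk]
  · obtain ⟨j, hj⟩ : ∃ j, (k : ℕ) = ℓ + j := ⟨k - ℓ, by omega⟩
    refine ⟨.BC, j, by simp only [inLen]; omega, Or.inl ⟨?_, ?_⟩⟩ <;>
      simp only [pathPos, ← add_assoc, Nat.cast_succ, ← hj, hk]
  · obtain ⟨j, hj⟩ : ∃ j, (k : ℕ) + 1 + j = 3 * ℓ + q := ⟨3 * ℓ + q - 1 - k, by omega⟩
    refine ⟨.AC, j, by simp only [inLen]; omega, Or.inr ⟨?_, ?_⟩⟩ <;>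
      simp only [pathPos, neg_eq_iff_add_eq_zero]
    · rw [← hk, ← Nat.cast_add, show j + 1 + (k : ℕ) = 3 * ℓ + q by omega, Fin.natCast_self]
    · rw [← hk, ← Nat.cast_succ, ← Nat.cast_add, show j + ((k : ℕ) + 1) = 3 * ℓ + q by omega,
        Fin.natCast_self]

lemma partPos_bijective (hℓ : 2 ≤ ℓ) : Function.Bijective (partPos ℓ q) := by
  refine (Fintype.bijective_iff_surjective_and_card _).2 ⟨fun k => ?_, ?_⟩
  · obtain ⟨c, j, hj, ⟨h, -⟩ | ⟨h, -⟩⟩ := exists_pathPos_eq k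
    · exact ⟨pathPart c j, (partPos_pathPart hℓ c (by omega)).trans h⟩
    · exact ⟨pathPart c (j + 1), (partPos_pathPart hℓ c (by omega)).trans h⟩
  simp only [Fintype.card_sum, Fintype.card_sigma, Fintype.card_fin]
  rw [Fintype.sum_equiv PairClass.equivFin _ (fun i => inLen ℓ q (PairClass.equivFin.symm i))
    (fun c => by simp), Fin.sum_univ_three]
  show 3 + (inLen ℓ q .AB + inLen ℓ q .BC + inLen ℓ q .AC) = 3 * ℓ + q
  simp only [inLen]
  omega

lemma coreGraph_adj_triangleCycleVert_of_partPos_eq_add_one (hℓ : 2 ≤ ℓ)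
    (t : OrderedTriangle G) {p p' : PartIndex ℓ q} (h : partPos ℓ q p' = partPos ℓ q p + 1) :
    (coreGraph G ℓ q).Adj (triangleCycleVert t p) (triangleCycleVert t p') := by
  have hvert {c : PairClass} {j : ℕ} (hj : j ≤ inLen ℓ q c + 1) {p₀ : PartIndex ℓ q}
      (h₀ : pathPos ℓ q c j = partPos ℓ q p₀) :
      triangleCycleVert t p₀ = pathVert c (t.edge c) j := by
    rw [← (partPos_bijective hℓ).1 ((partPos_pathPart hℓ c hj).trans h₀),
      triangleCycleVert_pathPart t c j]
  obtain ⟨c, j, hj, ⟨h₁, h₂⟩ | ⟨h₁, h₂⟩⟩ := exists_pathPos_eq (partPos ℓ q p) <;>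
  · rw [← h] at h₂
    rw [hvert (by omega) h₁, hvert (by omega) h₂]
    exact (coreGraph_adj_iff hℓ).2 ⟨c, t.edge c, j, hj, by tauto⟩

lemma triangleCycle_adj_iff (hℓ : 2 ≤ ℓ) (t : OrderedTriangle G) (p p' : PartIndex ℓ q) :
    (triangleCycle t).Adj (triangleCycleVert t p) (triangleCycleVert t p') ↔
      (cycleGraph (3 * ℓ + q)).Adj (partPos ℓ q p) (partPos ℓ q p') := by
  simp only [triangleCycle, Subgraph.induce_adj, Set.mem_range, exists_apply_eq_apply,
    Subgraph.top_adj, true_and]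
  constructor
  · intro h
    simpa only [corePart_triangleCycleVert] using cycleGraph_adj_partPos_of_coreGraph_adj hℓ h
  · rw [cycleGraph_adj_iff_eq_add_one (by omega)]
    rintro (h | h)
    · exact (coreGraph_adj_triangleCycleVert_of_partPos_eq_add_one hℓ t h).symm
    · exact coreGraph_adj_triangleCycleVert_of_partPos_eq_add_one hℓ t h

def triangleCycleVertsEquiv (t : OrderedTriangle G) :
    (triangleCycle (ℓ := ℓ) (q := q) t).verts ≃ PartIndex ℓ q where
  toFun v := corePart G ℓ q v
  invFun p := ⟨triangleCycleVert t p, p, rfl⟩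
  left_inv := by rintro ⟨_, p, rfl⟩; simp only [corePart_triangleCycleVert]
  right_inv := corePart_triangleCycleVert t

noncomputable def triangleCycleIso (hℓ : 2 ≤ ℓ) (t : OrderedTriangle G) :
    (triangleCycle (ℓ := ℓ) (q := q) t).coe ≃g cycleGraph (3 * ℓ + q) where
  toEquiv := (triangleCycleVertsEquiv t).trans (Equiv.ofBijective _ (partPos_bijective hℓ))
  map_rel_iff' := by
    rintro ⟨_, p, rfl⟩ ⟨_, p', rfl⟩
    simp only [triangleCycleVertsEquiv, Equiv.trans_apply, Equiv.coe_fn_mk,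
      Equiv.ofBijective_apply, corePart_triangleCycleVert, Subgraph.coe_adj]
    exact (triangleCycle_adj_iff hℓ t p p').symm

end Position

section Subgraph

variable {M : (coreGraph G ℓ q).Subgraph}

lemma adj_iff_coreGraph_adj_of_isRight (hℓ : 2 ≤ ℓ) {x y : CoreV V G ℓ q}
    (hdeg : (M.neighborSet x).ncard = 2) (hx : x.isRight) :
    M.Adj x y ↔ (coreGraph G ℓ q).Adj x y := by
  rcases x with _ | ⟨c, e, i⟩
  · simp at hx
  refine Subgraph.adj_iff_of_neighborSet_subset (coreGraph_neighborSet_inr_subset hℓ c e i)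
    (Set.toFinite _) ?_
  rw [hdeg]
  exact (Set.ncard_insert_le _ _).trans (by rw [Set.ncard_singleton])

lemma pathVert_mem_verts (hℓ : 2 ≤ ℓ) (hdeg : ∀ v ∈ M.verts, (M.neighborSet v).ncard = 2)
    {c : PairClass} {e : {p : V × V // G.Adj p.1 p.2}} (h : pathVert c e 1 ∈ M.verts) {j : ℕ}
    (hj : j ≤ inLen ℓ q c + 1) : pathVert c e j ∈ M.verts := by
  have neighbors_mem (i : Fin (inLen ℓ q c)) (hi : pathVert c e (i + 1) ∈ M.verts) :
      pathVert c e i ∈ M.verts ∧ pathVert c e (i + 2) ∈ M.verts := by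
    rw [pathVert_succ] at hi
    have hadj (y : CoreV V G ℓ q) (hy : (coreGraph G ℓ q).Adj (.inr ⟨c, e, i⟩) y) :
        y ∈ M.verts :=
      M.edge_vert ((adj_iff_coreGraph_adj_of_isRight hℓ (hdeg _ hi) rfl).2 hy).symm
    rw [← pathVert_succ] at hadj
    exact ⟨hadj _ ((coreGraph_adj_iff hℓ).2 ⟨c, e, i, i.2.le, Or.inr ⟨rfl, rfl⟩⟩),
      hadj _ ((coreGraph_adj_iff hℓ).2 ⟨c, e, i + 1, i.2, Or.inl ⟨rfl, rfl⟩⟩)⟩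
  have mem_and_succ_mem (j : ℕ) (hj : j ≤ inLen ℓ q c) :
      pathVert c e j ∈ M.verts ∧ pathVert c e (j + 1) ∈ M.verts := by
    induction j with
    | zero => exact ⟨(neighbors_mem ⟨0, inLen_pos hℓ c⟩ h).1, h⟩
    | succ j ih => exact ⟨(ih (by omega)).2, (neighbors_mem ⟨j, hj⟩ (ih (by omega)).2).2⟩
  rcases Nat.lt_or_ge j (inLen ℓ q c + 1) with hj' | hj'
  · exact (mem_and_succ_mem j (by omega)).1
  · obtain rfl : j = inLen ℓ q c + 1 := by omega
    exact (mem_and_succ_mem _ le_rfl).2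

lemma pairwise_adj_of_forall_pairClass {t : Fin 3 → V}
    (h : ∀ c, G.Adj (t (srcCopy c)) (t (dstCopy c))) : Pairwise fun i j => G.Adj (t i) (t j) := by
  have hAB := h .AB
  have hBC := h .BC
  have hAC := h .AC
  intro i j hij
  fin_cases i <;> fin_cases j <;>
    first | exact absurd rfl hij | assumption | exact G.adj_symm ‹_›

lemma exists_forall_triangleCycleVert_mem (hℓ : 2 ≤ ℓ)
    (hdeg : ∀ v ∈ M.verts, (M.neighborSet v).ncard = 2)
    (huniq : ∀ p, ∃! v : CoreV V G ℓ q, v ∈ M.verts ∧ corePart G ℓ q v = p) :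
    ∃ t : OrderedTriangle G, ∀ p, triangleCycleVert t p ∈ M.verts := by
  have hcopy (k : Fin 3) : ∃ a, .inl (k, a) ∈ M.verts := by
    obtain ⟨v, ⟨hv, hpart⟩, -⟩ := huniq (.inl k)
    obtain ⟨a, rfl⟩ := exists_eq_inl_of_corePart_eq hpart
    exact ⟨a, hv⟩
  have hpath (c : PairClass) : ∃ e, pathVert c e 1 ∈ M.verts := by
    obtain ⟨v, ⟨hv, hpart⟩, -⟩ := huniq (.inr ⟨c, ⟨0, inLen_pos hℓ c⟩⟩)
    obtain ⟨e, rfl⟩ := exists_eq_inr_of_corePart_eq hpart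
    rw [← pathVert_succ] at hv
    exact ⟨e, hv⟩
  choose a ha using hcopy
  choose e he using hpath
  have eq_a {k : Fin 3} {b : V} (hb : .inl (k, b) ∈ M.verts) : b = a k :=
    (Prod.mk.inj (Sum.inl_injective ((huniq (.inl k)).unique ⟨hb, rfl⟩ ⟨ha k, rfl⟩))).2
  have hsrc (c : PairClass) : (e c).1.1 = a (srcCopy c) :=
    eq_a (pathVert_mem_verts hℓ hdeg (he c) (Nat.zero_le _))
  have hdst (c : PairClass) : (e c).1.2 = a (dstCopy c) := by
    apply eq_a
    rw [← pathVert_succ_of_inLen_le c (e c) le_rfl]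
    exact pathVert_mem_verts hℓ hdeg (he c) le_rfl
  let t : OrderedTriangle G := ⟨a, pairwise_adj_of_forall_pairClass fun c => by
    rw [← hsrc, ← hdst]; exact (e c).2⟩
  have hedge (c : PairClass) : t.edge c = e c :=
    Subtype.ext (Prod.ext (hsrc c).symm (hdst c).symm)
  refine ⟨t, fun p => ?_⟩
  rcases p with k | ⟨c, i⟩
  · exact ha k
  · rw [triangleCycleVert, hedge, ← pathVert_succ]
    exact pathVert_mem_verts hℓ hdeg (he c) (by omega)

lemma eq_triangleCycle_of_forall_mem (hℓ : 2 ≤ ℓ)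
    (hdeg : ∀ v ∈ M.verts, (M.neighborSet v).ncard = 2)
    (huniq : ∀ p, ∃! v : CoreV V G ℓ q, v ∈ M.verts ∧ corePart G ℓ q v = p)
    {t : OrderedTriangle G} (hmem : ∀ p, triangleCycleVert t p ∈ M.verts) :
    M = triangleCycle t := by
  have hverts : M.verts = Set.range (triangleCycleVert t) := by
    refine Set.Subset.antisymm (fun v hv => ⟨corePart G ℓ q v, ?_⟩) (Set.range_subset_iff.2 hmem)
    exact (huniq _).unique ⟨hmem _, corePart_triangleCycleVert t _⟩ ⟨hv, rfl⟩
  refine Subgraph.ext hverts (funext₂ fun u v => propext ⟨fun h => ?_, fun h => ?_⟩)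
  · exact ⟨hverts ▸ M.edge_vert h, hverts ▸ M.edge_vert h.symm, M.adj_sub h⟩
  · obtain ⟨hu, hv, huv⟩ := h
    rw [← hverts] at hu hv
    rcases isRight_or_isRight_of_coreGraph_adj huv with hr | hr
    · exact (adj_iff_coreGraph_adj_of_isRight hℓ (hdeg u hu) hr).2 huv
    · exact ((adj_iff_coreGraph_adj_of_isRight hℓ (hdeg v hv) hr).2 huv.symm).symm

end Subgraph

noncomputable def orderedTriangleEquivCoreCycles (hℓ : 2 ≤ ℓ) :
    OrderedTriangle G ≃ {M : (coreGraph G ℓ q).Subgraph //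
        Nonempty (cycleGraph (3 * ℓ + q) ≃g M.coe) ∧
        ∀ p : PartIndex ℓ q, ∃! v : CoreV V G ℓ q, v ∈ M.verts ∧ corePart G ℓ q v = p} :=
  haveI : NeZero (3 * ℓ + q) := ⟨by omega⟩
  Equiv.ofBijective (fun t => ⟨triangleCycle t, ⟨(triangleCycleIso hℓ t).symm⟩,
      existsUnique_mem_triangleCycle_verts t⟩)
    ⟨fun t t' h => triangleCycle_injective (congrArg Subtype.val h), fun ⟨M, ⟨φ⟩, huniq⟩ => by
      have hdeg (v) (hv : v ∈ M.verts) := Subgraph.ncard_neighborSet_eq_two (by omega) φ hv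
      obtain ⟨t, ht⟩ := exists_forall_triangleCycleVert_mem hℓ hdeg huniq
      exact ⟨t, Subtype.ext (eq_triangleCycle_of_forall_mem hℓ hdeg huniq ht).symm⟩⟩

theorem core_cycles_eq_six_mul_triangles_general {V : Type} (G : SimpleGraph V)
    (ℓ q : ℕ) (hℓ : 2 ≤ ℓ) :
    Nat.card {M : (coreGraph G ℓ q).Subgraph //
        Nonempty (SimpleGraph.cycleGraph (3 * ℓ + q) ≃g M.coe) ∧
        ∀ p : Fin 3 ⊕ Σ c : PairClass, Fin (inLen ℓ q c),
          ∃! v : CoreV V G ℓ q, v ∈ M.verts ∧ corePart G ℓ q v = p} =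
      6 * Nat.card {s : Finset V // G.IsNClique 3 s} := by
  rw [← Nat.card_congr (orderedTriangleEquivCoreCycles hℓ), card_pairwise_adj_eq_factorial_mul]
  rfl

/-- For `ℓ ≥ 2`, `q ≤ 2` and `r = 3ℓ + q`, the number of subgraphs
of `G_core` that are cycles of length `r` containing exactly one vertex from each
part of the partition `P'` equals six times the number of triangles of `G`. -/
theorem core_cycles_eq_six_mul_triangles {V : Type} [Fintype V] (G : SimpleGraph V)
    (ℓ q : ℕ) (hℓ : 2 ≤ ℓ) (hq : q ≤ 2) :
    Nat.card {M : (coreGraph G ℓ q).Subgraph //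
        Nonempty (SimpleGraph.cycleGraph (3 * ℓ + q) ≃g M.coe) ∧
        ∀ p : Fin 3 ⊕ Σ c : PairClass, Fin (inLen ℓ q c),
          ∃! v : CoreV V G ℓ q, v ∈ M.verts ∧ corePart G ℓ q v = p} =
      6 * Nat.card {s : Finset V // G.IsNClique 3 s} :=
  core_cycles_eq_six_mul_triangles_general G ℓ q hℓ
end
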